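/- For a field F and elements a, b in F^× with a + b = 1, the differential form (da/a) ∧ (db/b) vanishes in Ω²_F (the second exterior power of the module of Kähler differentials of F over ℤ). -/
import Mathlib


open ExteriorAlgebra

/-- For a field `F` and `a, b ∈ F^×` with `a + b = 1`, the differential form
`(da/a) ∧ (db/b)` vanishes in `Ω²_F = ⋀² Ω¹_{F/ℤ}`. -/
theorem dlog_wedge_dlog_eq_zero_of_add_eq_one (F : Type*) [Field F]
    (a b : F) (ha : a ≠ 0) (hb : b ≠ 0) (hab : a + b = 1) :
    ExteriorAlgebra.ιMulti F 2
      (![a⁻¹ • (KaehlerDifferential.D ℤ F a), b⁻¹ • (KaehlerDifferential.D ℤ F b)]) = 0 := by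
  set x := a⁻¹ • (KaehlerDifferential.D ℤ F a) with hx
  have hbval : b = 1 - a := eq_sub_of_add_eq' hab
  have hD : KaehlerDifferential.D ℤ F b = - KaehlerDifferential.D ℤ F a := by
    rw [hbval, map_sub, Derivation.map_one_eq_zero, zero_sub]
  have hkey : b⁻¹ • (KaehlerDifferential.D ℤ F b) = (-(b⁻¹ * a)) • x := by
    rw [hD, hx, smul_neg, smul_smul, neg_mul, neg_smul, neg_inj]
    congr 1
    field_simp
  rw [hkey]
  have h2 : ![x, (-(b⁻¹ * a)) • x] = Function.update ![x, x] 1 ((-(b⁻¹ * a)) • x) := by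
    ext i
    fin_cases i <;> simp
  rw [h2, (ιMulti F 2).map_update_smul, AlternatingMap.map_eq_zero_of_eq _ _ (i := 0) (j := 1)
    (by simp) (by decide), smul_zero]
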